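/- (Pointwise Schwarz inequality at a maximum point) Let λ, μ : Ω → ℝ be positive functions on an open set Ω ⊆ ℂ, twice differentiable at w₀ ∈ Ω, such that u = λ/μ attains a local maximum at w₀. Suppose the Gaussian curvatures K_λ = -(1/(4λ))Δ log λ and K_μ = -(1/(4μ))Δ log μ satisfy K_λ(w₀) ≤ -k_C < 0 and K_μ(w₀) ≥ -k_R with k_C, k_R > 0. Then u(w₀) ≤ k_R/k_C. -/

import Mathlib

/-- The Laplacian of a function `f : ℂ → ℝ` at a point, as the trace of the
second derivative in the directions `1` and `i`. -/
noncomputable def laplacianAt (f : ℂ → ℝ) (w : ℂ) : ℝ :=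
  iteratedFDeriv ℝ 2 f w ![1, 1] + iteratedFDeriv ℝ 2 f w ![Complex.I, Complex.I]

/-!
At an interior maximum of `u = λ / μ`, the function `log λ - log μ` has a local maximum, so its
Laplacian is nonpositive there: every second directional derivative is, by restricting to a line
and applying the one-variable second-derivative test. Hence `Δ log λ ≤ Δ log μ` at `w₀`, and
the curvature bounds turn this into `4 λ k_C ≤ Δ log λ ≤ Δ log μ ≤ 4 μ k_R`.
-/

open Filter Topology InnerProductSpace Laplacian

theorem IsLocalMax.deriv_deriv_nonpos {f : ℝ → ℝ} {a : ℝ} (h : IsLocalMax f a)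
    (hc : ContinuousAt f a) : deriv (deriv f) a ≤ 0 := by
  by_contra! hpos
  -- the second-derivative test would make `a` a local minimum too, so `f` is locally constant
  have hconst : f =ᶠ[𝓝 a] fun _ ↦ f a :=
    (h.and (isLocalMin_of_deriv_deriv_pos hpos h.deriv_eq_zero hc)).mono
      fun _ hx ↦ le_antisymm hx.1 hx.2
  have hderiv : deriv f =ᶠ[𝓝 a] fun _ ↦ 0 :=
    hconst.eventuallyEq_nhds.mono fun _ hx ↦ by rw [hx.deriv_eq, deriv_const]
  rw [hderiv.deriv_eq, deriv_const] at hpos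
  exact hpos.false

theorem ContDiffAt.deriv_deriv_comp_add_smul {𝕜 E F : Type*} [NontriviallyNormedField 𝕜]
    [NormedAddCommGroup E] [NormedSpace 𝕜 E] [NormedAddCommGroup F] [NormedSpace 𝕜 F]
    {f : E → F} {x : E} (hf : ContDiffAt 𝕜 2 f x) (v : E) :
    deriv (deriv fun t : 𝕜 ↦ f (x + t • v)) 0 = fderiv 𝕜 (fderiv 𝕜 f) x v v := by
  have hline (t : 𝕜) : HasDerivAt (fun t : 𝕜 ↦ x + t • v) v t := by
    simpa using ((hasDerivAt_id t).smul_const v).const_add x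
  have hderiv : deriv (fun t : 𝕜 ↦ f (x + t • v)) =ᶠ[𝓝 0] fun t ↦ fderiv 𝕜 f (x + t • v) v := by
    have hcont : Tendsto (fun t : 𝕜 ↦ x + t • v) (𝓝 0) (𝓝 x) := by
      simpa using (hline 0).continuousAt.tendsto
    filter_upwards [hcont.eventually (hf.eventually (by simp))] with t ht
    exact ((ht.differentiableAt two_ne_zero).hasFDerivAt.comp_hasDerivAt t (hline t)).deriv
  have hf' : HasFDerivAt (fderiv 𝕜 f) (fderiv 𝕜 (fderiv 𝕜 f) x) (x + (0 : 𝕜) • v) := by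
    rw [zero_smul, add_zero]
    exact ((hf.fderiv_right (m := 1) le_rfl).differentiableAt one_ne_zero).hasFDerivAt
  have hcomp : HasDerivAt (fun t : 𝕜 ↦ fderiv 𝕜 f (x + t • v))
      (fderiv 𝕜 (fderiv 𝕜 f) x v) 0 :=
    hf'.comp_hasDerivAt (l := fderiv 𝕜 f) 0 (hline 0)
  have happly : HasDerivAt (fun t : 𝕜 ↦ fderiv 𝕜 f (x + t • v) v)
      (fderiv 𝕜 (fderiv 𝕜 f) x v v) 0 := by
    simpa using hcomp.clm_apply (hasDerivAt_const (0 : 𝕜) v)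
  exact hderiv.deriv_eq.trans happly.deriv

theorem IsLocalMax.iteratedFDeriv_two_apply_self_nonpos {E : Type*} [NormedAddCommGroup E]
    [NormedSpace ℝ E] {f : E → ℝ} {x : E} (h : IsLocalMax f x) (hf : ContDiffAt ℝ 2 f x)
    (v : E) : iteratedFDeriv ℝ 2 f x ![v, v] ≤ 0 := by
  have hline : ContinuousAt (fun t : ℝ ↦ x + t • v) 0 := by fun_prop
  have hmax : IsLocalMax (fun t : ℝ ↦ f (x + t • v)) 0 :=
    IsLocalMax.comp_continuous (f := f) (by simpa using h) hline
  have hcont : ContinuousAt (fun t : ℝ ↦ f (x + t • v)) 0 :=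
    hf.continuousAt.comp_of_eq hline (by simp)
  simpa [iteratedFDeriv_two_apply, hf.deriv_deriv_comp_add_smul] using
    hmax.deriv_deriv_nonpos hcont

theorem IsLocalMax.laplacian_nonpos {E : Type*} [NormedAddCommGroup E] [InnerProductSpace ℝ E]
    [FiniteDimensional ℝ E] {f : E → ℝ} {x : E} (h : IsLocalMax f x) (hf : ContDiffAt ℝ 2 f x) :
    Δ f x ≤ 0 := by
  rw [laplacian_eq_iteratedFDeriv_stdOrthonormalBasis]
  exact Finset.sum_nonpos fun i _ ↦ h.iteratedFDeriv_two_apply_self_nonpos hf _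

theorem laplacianAt_eq_laplacian (f : ℂ → ℝ) (w : ℂ) : laplacianAt f w = Δ f w := by
  rw [laplacian_eq_iteratedFDeriv_complexPlane, laplacianAt]

theorem IsLocalMaxOn.isLocalMax_log_sub_log {E : Type*} [TopologicalSpace E] {f g : E → ℝ}
    {s : Set E} {x : E} (h : IsLocalMaxOn (fun y ↦ f y / g y) s x) (hs : s ∈ 𝓝 x)
    (hf : ∀ y ∈ s, 0 < f y) (hg : ∀ y ∈ s, 0 < g y) :
    IsLocalMax (fun y ↦ Real.log (f y) - Real.log (g y)) x := by
  filter_upwards [h.isLocalMax hs, hs] with y hy hys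
  have hxs := mem_of_mem_nhds hs
  rw [← Real.log_div (hf y hys).ne' (hg y hys).ne', ← Real.log_div (hf x hxs).ne' (hg x hxs).ne']
  exact Real.log_le_log (div_pos (hf y hys) (hg y hys)) hy

theorem pointwise_schwarz_at_max_general (Ω : Set ℂ) (hΩ : IsOpen Ω)
    (lam mu : ℂ → ℝ) (w₀ : ℂ) (hw₀ : w₀ ∈ Ω)
    (hlam_pos : ∀ w ∈ Ω, 0 < lam w) (hmu_pos : ∀ w ∈ Ω, 0 < mu w)
    (hlam : ContDiffAt ℝ 2 (fun w => Real.log (lam w)) w₀)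
    (hmu : ContDiffAt ℝ 2 (fun w => Real.log (mu w)) w₀)
    (hmax : IsLocalMaxOn (fun w => lam w / mu w) Ω w₀)
    (kC kR : ℝ) (hkC : 0 < kC)
    (hcurvLam : -(1 / (4 * lam w₀)) * laplacianAt (fun w => Real.log (lam w)) w₀ ≤ -kC)
    (hcurvMu : -(1 / (4 * mu w₀)) * laplacianAt (fun w => Real.log (mu w)) w₀ ≥ -kR) :
    lam w₀ / mu w₀ ≤ kR / kC := by
  have hlam₀ := hlam_pos w₀ hw₀
  have hmu₀ := hmu_pos w₀ hw₀
  have hlog_max := hmax.isLocalMax_log_sub_log (hΩ.mem_nhds hw₀) hlam_pos hmu_pos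
  have hlaplacian : Δ (fun w ↦ Real.log (lam w)) w₀ ≤ Δ (fun w ↦ Real.log (mu w)) w₀ := by
    have := hlog_max.laplacian_nonpos (hlam.sub hmu)
    rw [← Pi.sub_def, hlam.laplacian_sub hmu] at this
    linarith
  rw [laplacianAt_eq_laplacian, neg_mul, neg_le_neg_iff, one_div, ← div_eq_inv_mul,
    le_div_iff₀ (by positivity)] at hcurvLam
  rw [laplacianAt_eq_laplacian, neg_mul, ge_iff_le, neg_le_neg_iff, one_div, ← div_eq_inv_mul,
    div_le_iff₀ (by positivity)] at hcurvMu
  rw [div_le_div_iff₀ hmu₀ hkC]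
  linarith

/-- Pointwise Schwarz inequality at a maximum point: if `u = λ/μ` attains a local maximum
at `w₀`, the Gaussian curvature of `λ` at `w₀` is `≤ -k_C < 0` and that of `μ` is `≥ -k_R`,
then `u(w₀) ≤ k_R/k_C`. -/
theorem pointwise_schwarz_at_max (Ω : Set ℂ) (hΩ : IsOpen Ω)
    (lam mu : ℂ → ℝ) (w₀ : ℂ) (hw₀ : w₀ ∈ Ω)
    (hlam_pos : ∀ w ∈ Ω, 0 < lam w) (hmu_pos : ∀ w ∈ Ω, 0 < mu w)
    (hlam : ContDiffAt ℝ 2 (fun w => Real.log (lam w)) w₀)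
    (hmu : ContDiffAt ℝ 2 (fun w => Real.log (mu w)) w₀)
    (hmax : IsLocalMaxOn (fun w => lam w / mu w) Ω w₀)
    (kC kR : ℝ) (hkC : 0 < kC) (hkR : 0 < kR)
    (hcurvLam : -(1 / (4 * lam w₀)) * laplacianAt (fun w => Real.log (lam w)) w₀ ≤ -kC)
    (hcurvMu : -(1 / (4 * mu w₀)) * laplacianAt (fun w => Real.log (mu w)) w₀ ≥ -kR) :
    lam w₀ / mu w₀ ≤ kR / kC :=
  pointwise_schwarz_at_max_general Ω hΩ lam mu w₀ hw₀ hlam_pos hmu_pos hlam hmu hmax kC kR hkC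
    hcurvLam hcurvMu
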